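/- arXiv:1904.09922 — 3 statements merged into one kernel-verified Lean document; each statement's English description precedes it below -/
import Mathlib

section
/- Suppose $\mu_N \in (0,1)$, $r_N \in [0,1)$ satisfy $N\mu_N \to \infty$, and there exists $C > 0$ such that for all sufficiently large $N$, $r_N \ln_+(N r_N) \le C N \mu_N^2$, where $\ln_+(x) = \max(\ln x, 0)$. Then $r_N / (N\mu_N^2) \to 0$ as $N \to \infty$. -/
open Filter

/-- Mutation dominating case: if `N μ_N → ∞` and `r_N ln₊(N r_N) ≤ C N μ_N²`
for large `N` (with `ln₊ x = max (log x) 0`), then `r_N / (N μ_N²) → 0`. -/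
theorem stmt1 (μ r : ℕ → ℝ)
    (hμ : ∀ N, μ N ∈ Set.Ioo (0 : ℝ) 1)
    (hr : ∀ N, r N ∈ Set.Ico (0 : ℝ) 1)
    (h1 : Tendsto (fun N : ℕ => (N : ℝ) * μ N) atTop atTop)
    (h2 : ∃ C : ℝ, 0 < C ∧ ∀ᶠ N : ℕ in atTop,
      r N * max (Real.log ((N : ℝ) * r N)) 0 ≤ C * ((N : ℝ) * (μ N)^2)) :
    Tendsto (fun N : ℕ => r N / ((N : ℝ) * (μ N)^2)) atTop (nhds 0) := by
  obtain ⟨C, hC, h2⟩ := h2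
  rw [Metric.tendsto_atTop]
  intro ε hε
  have hev : ∀ᶠ N : ℕ in atTop,
      max 1 (Real.exp (2*C/ε + 1) * (2/ε)) ≤ (N : ℝ) * μ N :=
    h1.eventually_ge_atTop _
  have H := (hev.and h2).and (eventually_ge_atTop 1)
  rw [eventually_atTop] at H
  obtain ⟨N0, hN0⟩ := H
  refine ⟨N0, fun n hn => ?_⟩
  obtain ⟨⟨hge, hineq⟩, hn1⟩ := hN0 n hn
  obtain ⟨hμ0, hμ1⟩ := hμ n
  obtain ⟨hr0, hr1⟩ := hr n
  have hnpos : (0:ℝ) < n := by exact_mod_cast hn1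
  have hden : (0:ℝ) < (n:ℝ) * (μ n)^2 := mul_pos hnpos (pow_pos hμ0 2)
  have key : r n ≤ ε/2 * ((n:ℝ) * (μ n)^2) := by
    by_contra hlt
    push_neg at hlt
    have hx1 : (1:ℝ) ≤ (n:ℝ) * μ n := le_trans (le_max_left _ _) hge
    have hxB : Real.exp (2*C/ε + 1) * (2/ε) ≤ (n:ℝ) * μ n :=
      le_trans (le_max_right _ _) hge
    have hx2 : Real.exp (2*C/ε + 1) ≤ ε/2 * ((n:ℝ)*μ n)^2 := by
      have hm : Real.exp (2*C/ε+1) * (2/ε) * 1 ≤ ((n:ℝ)*μ n) * ((n:ℝ)*μ n) :=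
        mul_le_mul hxB hx1 zero_le_one (le_trans zero_le_one hx1)
      calc Real.exp (2*C/ε+1) = ε/2 * (Real.exp (2*C/ε+1) * (2/ε) * 1) := by
            field_simp
        _ ≤ ε/2 * (((n:ℝ)*μ n)^2) := by
            rw [sq]; exact mul_le_mul_of_nonneg_left hm (by positivity)
    have hnr : Real.exp (2*C/ε+1) < (n:ℝ) * r n := by
      calc Real.exp (2*C/ε+1) ≤ ε/2 * ((n:ℝ)*μ n)^2 := hx2
        _ = (n:ℝ) * (ε/2 * ((n:ℝ)*(μ n)^2)) := by ring
        _ < (n:ℝ) * r n := mul_lt_mul_of_pos_left hlt hnpos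
    have hlog : 2*C/ε + 1 ≤ Real.log ((n:ℝ) * r n) := by
      rw [← Real.log_exp (2*C/ε+1)]
      exact Real.log_le_log (Real.exp_pos _) hnr.le
    have hmax : 2*C/ε ≤ max (Real.log ((n:ℝ)*r n)) 0 :=
      le_trans (by linarith) (le_max_left _ _)
    have hrpos : 0 < r n := lt_trans (by positivity) hlt
    have hcon : C * ((n:ℝ)*(μ n)^2) < r n * max (Real.log ((n:ℝ)*r n)) 0 := by
      have h1' : C * ((n:ℝ)*(μ n)^2) = (ε/2 * ((n:ℝ)*(μ n)^2)) * (2*C/ε) := by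
        field_simp
      rw [h1']
      calc (ε/2 * ((n:ℝ)*(μ n)^2)) * (2*C/ε) < r n * (2*C/ε) :=
            mul_lt_mul_of_pos_right hlt (by positivity)
        _ ≤ r n * max (Real.log ((n:ℝ)*r n)) 0 :=
            mul_le_mul_of_nonneg_left hmax hrpos.le
    linarith
  have hfn : r n / ((n:ℝ) * (μ n)^2) ≤ ε/2 := (div_le_iff₀ hden).mpr key
  have hfn0 : 0 ≤ r n / ((n:ℝ) * (μ n)^2) := div_nonneg hr0 hden.le
  rw [Real.dist_eq, sub_zero, abs_of_nonneg hfn0]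
  linarith
end

section
/- Under the assumptions $s_N \to 0$, $N\mu_N \to \infty$, $N\mu_N^2/s_N \to 0$, and $r_N\ln_+(N r_N)/s_N \to 0$, for sufficiently large $N$ the quantity $t^*_N(r_N) = \frac{1}{s_N}\ln\left(\frac{N s_N^3}{\mu_N \cdot \max\{N\mu_N^2, r_N\ln_+(N r_N)\}}\right)$ satisfies $\frac{2}{3} t^*_N(0) < t^*_N(r_N) \le t^*_N(0)$, where $t^*_N(0) = \frac{1}{s_N}\ln\left(\frac{s_N^3}{\mu_N^3}\right)$. -/
open Filter Real Topology

/-!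
Put `M = max (N μ²) (r ln₊(N r))`, so that `t*_N(r) = (1/s) log (N s³ / (μ M))`.
Since `M ≥ N μ²`, the argument of the logarithm is at most `s³/μ³`, the argument for `r = 0`.
Conversely, `N μ² / s = (μ/s) · (N μ)` with `N μ → ∞` forces `μ ≪ s`, and together with
`r ln₊(N r) ≪ s ≤ s · N μ` this gives `M < N s μ`; hence the argument exceeds
`s²/μ² = (s³/μ³)^{2/3}`.
-/

theorem tendsto_zero_of_tendsto_mul_of_tendsto_atTop {α : Type*} {l : Filter α} {f g : α → ℝ}
    (hfg : Tendsto (fun x => f x * g x) l (𝓝 0)) (hg : Tendsto g l atTop) :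
    Tendsto f l (𝓝 0) := by
  have h := hfg.mul hg.inv_tendsto_atTop
  rw [mul_zero] at h
  refine h.congr' ?_
  filter_upwards [hg.eventually_gt_atTop 0] with x hx
  simp only [Pi.inv_apply]
  field_simp

theorem log_mul_cube_div_le {N μ s M : ℝ} (hμ : 0 < μ) (hs : 0 < s) (hN : 0 < N)
    (hM : N * μ ^ 2 ≤ M) :
    log (N * s ^ 3 / (μ * M)) ≤ log (s ^ 3 / μ ^ 3) := by
  have hM0 : 0 < M := lt_of_lt_of_le (by positivity) hM
  refine log_le_log (by positivity) ?_
  rw [div_le_div_iff₀ (by positivity) (by positivity)]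
  nlinarith [mul_le_mul_of_nonneg_left hM (show 0 ≤ s ^ 3 * μ by positivity)]

theorem two_thirds_mul_log_cube_div_lt {N μ s M : ℝ} (hμ : 0 < μ) (hs : 0 < s) (hM0 : 0 < M)
    (hM : M < N * s * μ) :
    2 / 3 * log (s ^ 3 / μ ^ 3) < log (N * s ^ 3 / (μ * M)) := by
  have hcube : 2 / 3 * log (s ^ 3 / μ ^ 3) = log ((s / μ) ^ 2) := by
    rw [← div_pow, log_pow, log_pow]
    push_cast
    ring
  rw [hcube]
  refine log_lt_log (by positivity) ?_
  rw [div_pow, div_lt_div_iff₀ (by positivity) (by positivity)]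
  nlinarith [mul_lt_mul_of_pos_left hM (show 0 < s ^ 2 * μ by positivity)]

theorem stmt3_general (μ s r : ℕ → ℝ)
    (hμ : ∀ N, μ N ∈ Set.Ioo (0 : ℝ) 1)
    (hs : ∀ N, s N ∈ Set.Ioc (0 : ℝ) (1/2))
    (h1 : Tendsto (fun N : ℕ => (N : ℝ) * μ N) atTop atTop)
    (h2 : Tendsto (fun N : ℕ => (N : ℝ) * (μ N)^2 / s N) atTop (nhds 0))
    (h3 : Tendsto (fun N : ℕ => r N * max (Real.log ((N : ℝ) * r N)) 0 / s N)
      atTop (nhds 0)) :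
    ∀ᶠ N : ℕ in atTop,
      (2/3) * ((1 / s N) * Real.log ((s N)^3 / (μ N)^3)) <
        (1 / s N) * Real.log ((N : ℝ) * (s N)^3 /
          (μ N * max ((N : ℝ) * (μ N)^2) (r N * max (Real.log ((N : ℝ) * r N)) 0))) ∧
      (1 / s N) * Real.log ((N : ℝ) * (s N)^3 /
          (μ N * max ((N : ℝ) * (μ N)^2) (r N * max (Real.log ((N : ℝ) * r N)) 0))) ≤
        (1 / s N) * Real.log ((s N)^3 / (μ N)^3) := by
  have hμs_tendsto : Tendsto (fun N => μ N / s N) atTop (𝓝 0) :=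
    tendsto_zero_of_tendsto_mul_of_tendsto_atTop (h2.congr fun N => by ring) h1
  filter_upwards [hμs_tendsto.eventually_lt_const one_pos, h3.eventually_lt_const one_pos,
    h1.eventually_ge_atTop 1] with N hμs hLs hNμ
  obtain ⟨hμ0, -⟩ := hμ N
  obtain ⟨hs0, -⟩ := hs N
  rw [div_lt_one hs0] at hμs hLs
  have hN : (0 : ℝ) < N := pos_of_mul_pos_left (one_pos.trans_le hNμ) hμ0.le
  set L := r N * max (log (N * r N)) 0
  have hM : (N : ℝ) * μ N ^ 2 ≤ max ((N : ℝ) * μ N ^ 2) L := le_max_left _ _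
  have hMlt : max ((N : ℝ) * μ N ^ 2) L < N * s N * μ N :=
    max_lt (by nlinarith) (by nlinarith)
  refine ⟨?_, mul_le_mul_of_nonneg_left (log_mul_cube_div_le hμ0 hs0 hN hM) (by positivity)⟩
  rw [mul_left_comm]
  exact mul_lt_mul_of_pos_left
    (two_thirds_mul_log_cube_div_lt hμ0 hs0 (lt_of_lt_of_le (by positivity) hM) hMlt)
    (by positivity)

/-- With `t*_N(r) = (1/s_N) log (N s_N³ / (μ_N max{N μ_N², r ln₊(N r)}))`, under
`s_N ≪ 1`, `1 ≪ N μ_N`, `N μ_N² ≪ s_N`, `r_N ln₊(N r_N) ≪ s_N`, for large `N`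
one has `(2/3) t*_N(0) < t*_N(r_N) ≤ t*_N(0)` where `t*_N(0) = (1/s_N) log(s_N³/μ_N³)`. -/
theorem stmt3 (μ s r : ℕ → ℝ)
    (hμ : ∀ N, μ N ∈ Set.Ioo (0 : ℝ) 1)
    (hs : ∀ N, s N ∈ Set.Ioc (0 : ℝ) (1/2))
    (hr : ∀ N, r N ∈ Set.Ico (0 : ℝ) 1)
    (h0 : Tendsto s atTop (nhds 0))
    (h1 : Tendsto (fun N : ℕ => (N : ℝ) * μ N) atTop atTop)
    (h2 : Tendsto (fun N : ℕ => (N : ℝ) * (μ N)^2 / s N) atTop (nhds 0))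
    (h3 : Tendsto (fun N : ℕ => r N * max (Real.log ((N : ℝ) * r N)) 0 / s N)
      atTop (nhds 0)) :
    ∀ᶠ N : ℕ in atTop,
      (2/3) * ((1 / s N) * Real.log ((s N)^3 / (μ N)^3)) <
        (1 / s N) * Real.log ((N : ℝ) * (s N)^3 /
          (μ N * max ((N : ℝ) * (μ N)^2) (r N * max (Real.log ((N : ℝ) * r N)) 0))) ∧
      (1 / s N) * Real.log ((N : ℝ) * (s N)^3 /
          (μ N * max ((N : ℝ) * (μ N)^2) (r N * max (Real.log ((N : ℝ) * r N)) 0))) ≤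
        (1 / s N) * Real.log ((s N)^3 / (μ N)^3) :=
  stmt3_general μ s r hμ hs h1 h2 h3
end

section
/- Let $\delta \in (0, 1/4)$ and $C_1 > \ln(8/\delta^2)$. Set $C_2 = -C_1 + \ln\left(\frac{e^{C_1}}{2(1+\delta^2)} - 1\right) + \ln\left(\frac{1}{\delta^2} - 1\right)$. Suppose $p \in \left[\frac{2(1-\delta^2)}{e^{C_1}}, \frac{2(1+\delta^2)}{e^{C_1}}\right]$ (a sum of two fractions each in $[(1-\delta^2)e^{-C_1}, (1+\delta^2)e^{-C_1}]$). Then $f = \frac{1}{1 + (1/p - 1)e^{-(C_2+C_1)}}$ satisfies $\frac{1-\delta^2}{1+\delta^2} \le f \le 1 - \delta^2$. -/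
set_option maxHeartbeats 1000000 in
/-- Logistic endpoint bound for phase 2: with `δ ∈ (0,1/4)`,
`C₁ > ln(8/δ²)`, `C₂ = -C₁ + ln(e^{C₁}/(2(1+δ²)) - 1) + ln(1/δ² - 1)`, and
`p ∈ [2(1-δ²)e^{-C₁}, 2(1+δ²)e^{-C₁}]`, the value
`f = 1/(1 + (1/p - 1)e^{-(C₂+C₁)})` satisfies
`(1-δ²)/(1+δ²) ≤ f ≤ 1 - δ²`. -/
theorem stmt13 (δ C1 p : ℝ) (hδ : δ ∈ Set.Ioo (0 : ℝ) (1/4))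
    (hC1 : Real.log (8 / δ^2) < C1)
    (hp1 : 2 * (1 - δ^2) / Real.exp C1 ≤ p)
    (hp2 : p ≤ 2 * (1 + δ^2) / Real.exp C1) :
    (1 - δ^2) / (1 + δ^2) ≤
      1 / (1 + (1/p - 1) *
        Real.exp (-((-C1 + Real.log (Real.exp C1 / (2 * (1 + δ^2)) - 1) +
          Real.log (1/δ^2 - 1)) + C1))) ∧
    1 / (1 + (1/p - 1) *
        Real.exp (-((-C1 + Real.log (Real.exp C1 / (2 * (1 + δ^2)) - 1) +
          Real.log (1/δ^2 - 1)) + C1))) ≤ 1 - δ^2 := by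
  obtain ⟨hδ0, hδ4⟩ := hδ
  have hd0 : (0:ℝ) < δ^2 := by positivity
  have hd16 : δ^2 < 1/16 := by nlinarith
  have hE : (0:ℝ) < Real.exp C1 := Real.exp_pos _
  have hE8 : 8 / δ^2 < Real.exp C1 := by
    calc 8/δ^2 = Real.exp (Real.log (8/δ^2)) := (Real.exp_log (by positivity)).symm
    _ < Real.exp C1 := Real.exp_lt_exp.mpr hC1
  have hE128 : (128:ℝ) < Real.exp C1 := by
    have h : (128:ℝ) < 8/δ^2 := by rw [lt_div_iff₀ hd0]; nlinarith
    linarith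
  set E := Real.exp C1 with hEdef
  have hA : (0:ℝ) < E/(2*(1+δ^2)) - 1 := by
    rw [sub_pos, lt_div_iff₀ (by positivity)]; nlinarith
  have hK : (0:ℝ) < 1/δ^2 - 1 := by
    rw [sub_pos, lt_div_iff₀ hd0]; nlinarith
  set A := E/(2*(1+δ^2)) - 1 with hAdef
  set K := 1/δ^2 - 1 with hKdef
  have hexp : Real.exp (-((-C1 + Real.log A + Real.log K) + C1)) = (A*K)⁻¹ := by
    rw [show -((-C1 + Real.log A + Real.log K) + C1) = -(Real.log (A*K)) by
      rw [Real.log_mul (ne_of_gt hA) (ne_of_gt hK)]; ring,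
      Real.exp_neg, Real.exp_log (by positivity)]
  rw [hexp]
  have hp0 : 0 < p := lt_of_lt_of_le (div_pos (by nlinarith) hE) hp1
  have hpE2 : p * E ≤ 2*(1+δ^2) := (le_div_iff₀ hE).mp hp2
  have hpE1 : 2*(1-δ^2) ≤ p * E := (div_le_iff₀ hE).mp hp1
  have hB1 : A ≤ 1/p - 1 := by
    have h : E/(2*(1+δ^2)) ≤ 1/p := by
      rw [div_le_div_iff₀ (by positivity) hp0]; nlinarith
    rw [hAdef]; linarith
  have hB2 : 1/p - 1 ≤ 2*A := by
    have h : 1/p ≤ E/(2*(1-δ^2)) := by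
      rw [div_le_div_iff₀ hp0 (by nlinarith)]; nlinarith
    have hy : E/(2*(1-δ^2)) * (2*(1-δ^2)) = E := div_mul_cancel₀ _ (by nlinarith)
    have hy0 : 0 < E/(2*(1-δ^2)) := div_pos hE (by nlinarith)
    have hy64 : (64:ℝ) < E/(2*(1-δ^2)) := by
      nlinarith [hy, hE128, mul_pos hy0 hd0]
    have hprod : (0:ℝ) ≤ (E/(2*(1-δ^2)) - 64) * (1/16 - δ^2) :=
      mul_nonneg (by linarith) (by linarith)
    have h2 : E/(2*(1-δ^2)) + 1 ≤ E/(1+δ^2) := by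
      rw [le_div_iff₀ (by positivity : (0:ℝ) < 1+δ^2)]
      nlinarith [hy, hy64, hprod, hd16, hd0]
    have h3 : 2*A = E/(1+δ^2) - 2 := by rw [hAdef]; field_simp
    linarith
  set B := 1/p - 1 with hBdef
  have hB0 : 0 < B := lt_of_lt_of_le hA hB1
  have hKd : K * δ^2 = 1 - δ^2 := by rw [hKdef]; field_simp
  clear_value E A K B
  have hxeq : B * (A*K)⁻¹ * (1 - δ^2) = B * δ^2 / A := by
    rw [← hKd, mul_inv]
    field_simp
  set x := B * (A*K)⁻¹ with hxdef
  have hx0 : 0 < x := mul_pos hB0 (inv_pos.mpr (mul_pos hA hK))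
  have h1x : (0:ℝ) < 1 + x := by linarith
  have hx1 : δ^2 ≤ x * (1 - δ^2) := by
    rw [hxeq, le_div_iff₀ hA]; nlinarith
  have hx2 : x * (1 - δ^2) ≤ 2*δ^2 := by
    rw [hxeq, div_le_iff₀ hA]; nlinarith
  constructor
  · rw [div_le_div_iff₀ (by positivity) h1x]
    nlinarith
  · rw [div_le_iff₀ h1x]
    nlinarith
end
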